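/- arXiv:math/0505093 — 2 statements merged into one kernel-verified Lean document; each statement's English description precedes it below -/
import Mathlib

section
/- The sum over k ≥ 1 of 1/(k^2 * binomial(2k, k)) equals ζ(2)/3, i.e., ζ(2) = 3 ∑_{k=1}^∞ 1/(k^2 C(2k,k)). -/
open scoped BigOperators

noncomputable def P (r k : ℕ) : ℝ :=
  if r = 0 then 1 else ∑ j ∈ Finset.Icc 1 (k-1), 1 / (j:ℝ)^r

noncomputable def lam (m : ℕ) (f : ℕ → ℝ) : ℝ :=
  ∑' k : ℕ, (-1)^k * f (k+1) / (((k:ℝ)+1)^m * ((2*(k+1)).choose (k+1)))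

noncomputable def mu (m : ℕ) (f : ℕ → ℝ) : ℝ :=
  ∑' k : ℕ, f (k+1) / (((k:ℝ)+1)^m * ((2*(k+1)).choose (k+1)))

/-!
Markov's acceleration via a WZ pair. With
`F(n, m) = n!⁴ m!² / ((2n)! (m+n+1)!²)` and `G(n, m) = (2m+3n+3)/(4n+2) · F(n, m)` one has
`F(n, m) - F(n+1, m) = G(n, m) - G(n, m+1)`. Summing over `m`, the row sums `R(n) = ∑ₘ F(n, m)`
satisfy `R(n) - R(n+1) = G(n, 0) = 3 / ((n+1)² C(2n+2, n+1))`. Since `R(0) = ζ(2)` and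
`R(n) ≤ ζ(2)/(n+1) → 0`, summing over `n` gives `ζ(2) = 3 ∑ₙ 1/((n+1)² C(2n+2, n+1))`.
-/

open Filter Topology
open scoped Nat

theorem HasSum.of_eq_sub_succ {G : Type*} [AddCommGroup G] [TopologicalSpace G]
    [IsTopologicalAddGroup G] [T2Space G] {u f : ℕ → G} (hu : Summable u)
    (h : ∀ m, u m = f m - f (m + 1)) (hf : Tendsto f atTop (𝓝 0)) : HasSum u (f 0) := by
  have hpartial : ∀ M, ∑ m ∈ Finset.range M, u m = f 0 - f M := fun M => by
    simp only [h, Finset.sum_range_sub']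
  have hlim : Tendsto (fun M => ∑ m ∈ Finset.range M, u m) atTop (𝓝 (f 0)) := by
    simpa [hpartial] using tendsto_const_nhds.sub hf
  exact tendsto_nhds_unique hu.hasSum.tendsto_sum_nat hlim ▸ hu.hasSum

theorem Nat.factorial_two_mul_succ (n : ℕ) :
    (2 * (n + 1))! = (2 * n + 2) * ((2 * n + 1) * (2 * n)!) := by
  rw [show 2 * (n + 1) = 2 * n + 1 + 1 by ring, Nat.factorial_succ, Nat.factorial_succ]

theorem Nat.centralBinom_mul_factorial_sq (n : ℕ) : centralBinom n * n ! ^ 2 = (2 * n)! := by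
  rw [Nat.centralBinom_eq_two_mul_choose, two_mul, ← Nat.add_choose_mul_factorial_mul_factorial]
  ring

theorem Nat.succ_mul_factorial_sq_le_factorial_two_mul (n : ℕ) : (n + 1) * n ! ^ 2 ≤ (2 * n)! := by
  rw [← Nat.centralBinom_mul_factorial_sq]
  exact Nat.mul_le_mul_right _ (Nat.le_of_dvd (Nat.centralBinom_pos n) (Nat.succ_dvd_centralBinom n))

noncomputable def wzF (n m : ℕ) : ℝ := n ! ^ 4 * m ! ^ 2 / ((2 * n)! * (m + n + 1)! ^ 2)

noncomputable def wzG (n m : ℕ) : ℝ := (2 * m + 3 * n + 3) / (4 * n + 2) * wzF n m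

theorem wzF_sub_wzF_succ (n m : ℕ) : wzF n m - wzF (n + 1) m = wzG n m - wzG n (m + 1) := by
  have hrow : (m + (n + 1) + 1)! = (m + n + 2) * (m + n + 1)! := by
    rw [show m + (n + 1) + 1 = m + n + 1 + 1 by ring, Nat.factorial_succ]
  have hcol : (m + 1 + n + 1)! = (m + n + 2) * (m + n + 1)! := by
    rw [show m + 1 + n + 1 = m + n + 1 + 1 by ring, Nat.factorial_succ]
  simp only [wzG, wzF, Nat.factorial_two_mul_succ, hrow, hcol, Nat.factorial_succ]
  push_cast
  field_simp
  ring

theorem wzF_zero (m : ℕ) : wzF 0 m = 1 / ((m : ℝ) + 1) ^ 2 := by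
  simp only [wzF, Nat.factorial_zero, Nat.cast_one, one_pow, one_mul, mul_zero, add_zero,
    Nat.factorial_succ, Nat.cast_mul, Nat.cast_add]
  field_simp

theorem wzG_zero (n : ℕ) :
    wzG n 0 = 3 / (((n : ℝ) + 1) ^ 2 * ((2 * (n + 1)).choose (n + 1))) := by
  have hchoose : ((2 * (n + 1)).choose (n + 1) : ℝ) =
      (2 * n + 2) * ((2 * n + 1) * (2 * n)!) / ((n + 1) * n !) ^ 2 := by
    have h := Nat.centralBinom_mul_factorial_sq (n + 1)
    rw [Nat.centralBinom_eq_two_mul_choose, Nat.factorial_two_mul_succ, Nat.factorial_succ] at h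
    rw [eq_div_iff (by positivity)]
    exact_mod_cast h
  simp only [wzG, wzF, hchoose, zero_add, Nat.factorial_succ n]
  push_cast
  field_simp
  ring

theorem wzF_nonneg (n m : ℕ) : 0 ≤ wzF n m := by unfold wzF; positivity

theorem wzF_le (n m : ℕ) : wzF n m ≤ 1 / ((n : ℝ) + 1) * (1 / ((m : ℝ) + 1) ^ 2) := by
  have hn : ((n : ℝ) + 1) * n ! ^ 2 ≤ (2 * n)! := by
    exact_mod_cast Nat.succ_mul_factorial_sq_le_factorial_two_mul n
  have hm : (n ! : ℝ) * ((m + 1) * m !) ≤ (m + n + 1)! := by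
    have := Nat.factorial_mul_factorial_dvd_factorial_add n (m + 1)
    rw [show n + (m + 1) = m + n + 1 by ring, Nat.factorial_succ] at this
    exact_mod_cast Nat.le_of_dvd (Nat.factorial_pos _) this
  rw [wzF, div_mul_div_comm, one_mul, div_le_div_iff₀ (by positivity) (by positivity), one_mul]
  calc (n ! : ℝ) ^ 4 * m ! ^ 2 * ((n + 1) * ((m : ℝ) + 1) ^ 2)
      = ((n + 1) * n ! ^ 2) * (n ! * ((m + 1) * m !)) ^ 2 := by ring
    _ ≤ (2 * n)! * ((m + n + 1)! : ℝ) ^ 2 := by gcongr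

theorem wzG_nonneg (n m : ℕ) : 0 ≤ wzG n m := mul_nonneg (by positivity) (wzF_nonneg n m)

theorem wzG_le (n m : ℕ) : wzG n m ≤ 3 / ((m : ℝ) + 1) :=
  calc wzG n m ≤ (2 * m + 3 * n + 3) / (4 * n + 2) * (1 / ((n : ℝ) + 1) * (1 / ((m : ℝ) + 1) ^ 2)) :=
        mul_le_mul_of_nonneg_left (wzF_le n m) (by positivity)
    _ ≤ 3 / ((m : ℝ) + 1) := by
        rw [div_mul_div_comm, div_mul_div_comm, div_le_div_iff₀ (by positivity) (by positivity)]
        have hn : (0 : ℝ) ≤ n := n.cast_nonneg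
        have hm : (0 : ℝ) ≤ m := m.cast_nonneg
        nlinarith [mul_nonneg hn hm, mul_nonneg (mul_nonneg hn hn) hm]

theorem tendsto_wzG_atTop (n : ℕ) : Tendsto (wzG n) atTop (𝓝 0) := by
  refine squeeze_zero (wzG_nonneg n) (wzG_le n) ?_
  simpa [div_eq_mul_inv] using tendsto_one_div_add_atTop_nhds_zero_nat.const_mul (3 : ℝ)

theorem summable_one_div_succ_sq : Summable (fun m : ℕ => 1 / ((m : ℝ) + 1) ^ 2) := by
  simpa using (summable_nat_add_iff 1).2 (Real.summable_one_div_nat_pow.2 one_lt_two)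

theorem summable_wzF (n : ℕ) : Summable (wzF n) :=
  .of_nonneg_of_le (wzF_nonneg n) (wzF_le n) (summable_one_div_succ_sq.mul_left _)

noncomputable def wzRowSum (n : ℕ) : ℝ := ∑' m, wzF n m

theorem wzRowSum_zero : wzRowSum 0 = ∑' m : ℕ, 1 / ((m : ℝ) + 1) ^ 2 := tsum_congr wzF_zero

theorem wzRowSum_sub_succ (n : ℕ) : wzRowSum n - wzRowSum (n + 1) = wzG n 0 := by
  rw [wzRowSum, wzRowSum, ← (summable_wzF n).tsum_sub (summable_wzF (n + 1))]
  exact (HasSum.of_eq_sub_succ ((summable_wzF n).sub (summable_wzF (n + 1)))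
    (wzF_sub_wzF_succ n) (tendsto_wzG_atTop n)).tsum_eq

theorem tendsto_wzRowSum_atTop : Tendsto wzRowSum atTop (𝓝 0) := by
  have hle (n : ℕ) : wzRowSum n ≤ 1 / ((n : ℝ) + 1) * ∑' m : ℕ, 1 / ((m : ℝ) + 1) ^ 2 := by
    rw [← tsum_mul_left]
    exact (summable_wzF n).tsum_le_tsum (wzF_le n) (summable_one_div_succ_sq.mul_left _)
  refine squeeze_zero (fun n => tsum_nonneg (wzF_nonneg n)) hle ?_
  have := tendsto_one_div_add_atTop_nhds_zero_nat.mul_const (∑' m : ℕ, 1 / ((m : ℝ) + 1) ^ 2)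
  rwa [zero_mul] at this

theorem summable_one_div_succ_sq_mul_choose :
    Summable (fun k : ℕ => 1 / (((k : ℝ) + 1) ^ 2 * ((2 * (k + 1)).choose (k + 1)))) := by
  refine .of_nonneg_of_le (fun k => by positivity) (fun k => ?_) summable_one_div_succ_sq
  have hchoose : (1 : ℝ) ≤ (2 * (k + 1)).choose (k + 1) := by
    exact_mod_cast Nat.choose_pos (by omega)
  gcongr
  exact le_mul_of_one_le_right (by positivity) hchoose

theorem zeta_two_apery :
    (∑' k : ℕ, 1 / ((k:ℝ)+1)^2) =
      3 * ∑' k : ℕ, 1 / (((k:ℝ)+1)^2 * ((2*(k+1)).choose (k+1))) := by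
  have h := HasSum.of_eq_sub_succ (summable_one_div_succ_sq_mul_choose.mul_left 3)
    (fun k => by rw [wzRowSum_sub_succ, wzG_zero, mul_one_div]) tendsto_wzRowSum_atTop
  rw [← wzRowSum_zero, ← h.tsum_eq, tsum_mul_left]
end

section
/- ζ(3) = (5/2) ∑_{k=1}^∞ (-1)^{k+1} / (k^3 * C(2k,k)). -/
/-!
Van der Poorten's telescoping proof. With
`ε(N, k) = (-1)^k k!² (N-k)! / (2 k³ (N+k)!)` and `λ(N, k) = (-1)^k k!² (N-1-k)! / (N² (N+k)!)`
one checks `ε(N, k) - ε(N-1, k) = λ(N, k-1) - λ(N, k)`. Summing over `k` and then over `N`, the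
boundary terms `λ(N, 0) = 1/N³` and `λ(N, N-1) - ε(N, N) = (5/2) (-1)^(N-1) / (N³ C(2N, N))`
survive, so the partial sums of the two series differ by `∑_{k ≤ N} ε(N, k)`, which is
`O(1/N)` because `(N+1) k!² (N-k)! ≤ (N+k)!`.
-/

open scoped BigOperators

open Finset Filter Topology
open scoped Nat

noncomputable def aperySummand (k : ℕ) : ℝ :=
  (-1) ^ k / (((k : ℝ) + 1) ^ 3 * ((2 * (k + 1)).choose (k + 1)))

noncomputable def aperyEps (N k : ℕ) : ℝ :=
  (-1) ^ k * (k ! : ℝ) ^ 2 * ((N - k)! : ℝ) / (2 * (k : ℝ) ^ 3 * ((N + k)! : ℝ))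

noncomputable def aperyLam (N k : ℕ) : ℝ :=
  (-1) ^ k * (k ! : ℝ) ^ 2 * ((N - 1 - k)! : ℝ) / ((N : ℝ) ^ 2 * ((N + k)! : ℝ))

lemma aperyEps_succ_sub_aperyEps {N k : ℕ} (hk : k < N) :
    aperyEps (N + 1) (k + 1) - aperyEps N (k + 1) =
      aperyLam (N + 1) k - aperyLam (N + 1) (k + 1) := by
  obtain ⟨m, rfl⟩ := Nat.exists_eq_add_of_lt hk
  simp only [aperyEps, aperyLam]
  rw [show k + m + 1 + 1 - (k + 1) = m + 1 by omega, show k + m + 1 - (k + 1) = m by omega,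
    show k + m + 1 + 1 - 1 - k = m + 1 by omega, show k + m + 1 + 1 - 1 - (k + 1) = m by omega,
    show k + m + 1 + 1 + (k + 1) = (2 * k + m + 2) + 1 by omega,
    show k + m + 1 + (k + 1) = 2 * k + m + 2 by omega,
    show k + m + 1 + 1 + k = 2 * k + m + 2 by omega,
    Nat.factorial_succ (2 * k + m + 2), Nat.factorial_succ m, Nat.factorial_succ k]
  push_cast
  field_simp
  ring

lemma aperyLam_succ_zero (n : ℕ) : aperyLam (n + 1) 0 = 1 / ((n : ℝ) + 1) ^ 3 := by
  simp only [aperyLam]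
  rw [show n + 1 - 1 - 0 = n by omega, Nat.add_zero, Nat.factorial_succ, Nat.factorial_zero]
  push_cast
  field_simp

lemma aperyLam_sub_aperyEps_succ (n : ℕ) :
    aperyLam (n + 1) n - aperyEps (n + 1) (n + 1) = 5 / 2 * aperySummand n := by
  have hC := Nat.add_choose_mul_factorial_mul_factorial (n + 1) (n + 1)
  rw [show n + 1 + (n + 1) = 2 * (n + 1) by ring] at hC
  have hC' : ((2 * (n + 1)).choose (n + 1) : ℝ) = ((2 * (n + 1))! : ℝ) / ((n + 1)! : ℝ) ^ 2 := by
    rw [eq_div_iff (by positivity), ← hC]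
    push_cast
    ring
  simp only [aperyLam, aperyEps, aperySummand, hC']
  rw [show n + 1 - 1 - n = 0 by omega, show n + 1 - (n + 1) = 0 by omega,
    show n + 1 + (n + 1) = (2 * n + 1) + 1 by omega, show 2 * (n + 1) = (2 * n + 1) + 1 by omega,
    show n + 1 + n = 2 * n + 1 by omega, Nat.factorial_succ (2 * n + 1), Nat.factorial_succ n]
  push_cast
  field_simp
  ring

lemma sum_range_inv_cube_eq (N : ℕ) :
    ∑ j ∈ range N, 1 / ((j : ℝ) + 1) ^ 3 =
      5 / 2 * ∑ j ∈ range N, aperySummand j + ∑ j ∈ range N, aperyEps N (j + 1) := by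
  induction N with
  | zero => simp
  | succ n ih =>
    have htel : ∑ j ∈ range n, aperyEps (n + 1) (j + 1) - ∑ j ∈ range n, aperyEps n (j + 1) =
        aperyLam (n + 1) 0 - aperyLam (n + 1) n := by
      rw [← sum_sub_distrib, ← sum_range_sub' (aperyLam (n + 1))]
      exact sum_congr rfl fun j hj => aperyEps_succ_sub_aperyEps (mem_range.mp hj)
    rw [sum_range_succ, sum_range_succ, sum_range_succ (fun j => aperyEps (n + 1) (j + 1)), ih,
      ← aperyLam_succ_zero]
    linear_combination aperyLam_sub_aperyEps_succ n - htel

lemma factorial_sq_mul_factorial_sub_le {N k : ℕ} (hk : 1 ≤ k) (hkN : k ≤ N) :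
    (N + 1) * (k ! ^ 2 * (N - k)!) ≤ (N + k)! := by
  have hfac : k ! * (N - k)! ≤ N ! :=
    Nat.le_of_dvd (Nat.factorial_pos N) (Nat.factorial_mul_factorial_dvd_factorial hkN)
  have hchoose : N + 1 ≤ (N + k).choose k := by
    rw [← Nat.choose_symm_add, ← Nat.choose_succ_self_right N]
    exact Nat.choose_le_choose N (by omega)
  calc (N + 1) * (k ! ^ 2 * (N - k)!) = (N + 1) * (k ! * (N - k)!) * k ! := by ring
    _ ≤ (N + k).choose k * N ! * k ! := by gcongr
    _ = (N + k)! := Nat.add_choose_mul_factorial_mul_factorial N k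

lemma abs_aperyEps_le {N k : ℕ} (hk : 1 ≤ k) (hkN : k ≤ N) :
    |aperyEps N k| ≤ 1 / (k : ℝ) ^ 3 * (1 / ((N : ℝ) + 1)) := by
  have hkey : ((N : ℝ) + 1) * ((k ! : ℝ) ^ 2 * ((N - k)! : ℝ)) ≤ ((N + k)! : ℝ) := by
    exact_mod_cast factorial_sq_mul_factorial_sub_le hk hkN
  have hk0 : (0 : ℝ) < k := by exact_mod_cast hk
  rw [aperyEps, abs_div, abs_mul, abs_mul, abs_pow, abs_neg, abs_one, one_pow, one_mul,
    abs_of_pos (by positivity), abs_of_pos (by positivity), abs_of_pos (by positivity),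
    div_le_iff₀ (by positivity)]
  calc (k ! : ℝ) ^ 2 * ((N - k)! : ℝ) ≤ ((N + k)! : ℝ) / ((N : ℝ) + 1) := by
        rw [le_div_iff₀ (by positivity)]; linarith
    _ ≤ _ := by
        rw [div_le_iff₀ (by positivity)]
        field_simp
        nlinarith [(N + k).factorial_pos]

lemma summable_one_div_succ_pow_three : Summable fun k : ℕ => 1 / ((k : ℝ) + 1) ^ 3 := by
  have h := (summable_nat_add_iff 1).mpr (Real.summable_one_div_nat_pow.mpr (by norm_num : 1 < 3))
  simpa only [Nat.cast_add, Nat.cast_one] using h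

lemma summable_aperySummand : Summable aperySummand := by
  refine summable_one_div_succ_pow_three.of_norm_bounded fun k => ?_
  have hC : (1 : ℝ) ≤ ((2 * (k + 1)).choose (k + 1) : ℕ) := by
    exact_mod_cast Nat.choose_pos (by omega)
  rw [aperySummand, norm_div, norm_pow, norm_neg, norm_one, one_pow,
    Real.norm_of_nonneg (by positivity)]
  gcongr
  exact le_mul_of_one_le_right (by positivity) hC

lemma tendsto_sum_aperyEps :
    Tendsto (fun N => ∑ j ∈ range N, aperyEps N (j + 1)) atTop (𝓝 0) := by
  set ζ3 := ∑' k : ℕ, 1 / ((k : ℝ) + 1) ^ 3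
  refine squeeze_zero_norm (a := fun N : ℕ => ζ3 * (1 / ((N : ℝ) + 1))) (fun N => ?_) ?_
  · calc ‖∑ j ∈ range N, aperyEps N (j + 1)‖
        ≤ ∑ j ∈ range N, 1 / ((j : ℝ) + 1) ^ 3 * (1 / ((N : ℝ) + 1)) := by
          refine (norm_sum_le _ _).trans (sum_le_sum fun j hj => ?_)
          exact_mod_cast abs_aperyEps_le (Nat.le_add_left 1 j) (mem_range.mp hj)
      _ ≤ ζ3 * (1 / ((N : ℝ) + 1)) := by
          rw [← sum_mul]
          gcongr
          exact summable_one_div_succ_pow_three.sum_le_tsum _ fun j _ => by positivity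
  · simpa using (tendsto_one_div_add_atTop_nhds_zero_nat (𝕜 := ℝ)).const_mul ζ3

theorem zeta_three_apery :
    (∑' k : ℕ, 1 / ((k:ℝ)+1)^3) =
      (5/2) * ∑' k : ℕ, (-1)^k / (((k:ℝ)+1)^3 * ((2*(k+1)).choose (k+1))) := by
  change _ = 5 / 2 * ∑' k, aperySummand k
  have hlim := summable_one_div_succ_pow_three.hasSum.tendsto_sum_nat.sub
    (summable_aperySummand.hasSum.tendsto_sum_nat.const_mul (5 / 2))
  have herr : (fun N => ∑ j ∈ range N, 1 / ((j : ℝ) + 1) ^ 3 -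
      5 / 2 * ∑ j ∈ range N, aperySummand j) = fun N => ∑ j ∈ range N, aperyEps N (j + 1) := by
    funext N
    rw [sum_range_inv_cube_eq]
    ring
  rw [herr] at hlim
  exact sub_eq_zero.mp (tendsto_nhds_unique hlim tendsto_sum_aperyEps)
end
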